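/- (Open-set domain adaptation upper bound, Theorem 1.) Let P (source) and Q (target) be probability measures on X × Y such that P assigns zero mass to the unknown label C+1 and the target unknown-class prior π = π_{C+1}^Q satisfies π < 1. Let H be a set of measurable hypotheses containing the constant function x ↦ C+1, and let the loss L be nonnegative, bounded, symmetric, and satisfy the triangle inequality. Then for every h ∈ H: R_Q(h)/(1−π) ≤ R_P(h) + disc_H(Q_{X|Y≤C}, P_X) + λ + (π/(1−π)) · R_{Q,C+1}(h), where Q_{X|Y≤C} is the marginal on X of Q conditioned on the event {y ≤ C}, R*_Q(h') = E_{(x,y)∼Q}[L(h'(x),y) · 1{y ≤ C}], and λ = inf_{h'∈H} [ R*_Q(h')/(1−π) + R_P(h') ]. -/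

import Mathlib

/-!
STATEMENT 6 (Open-set domain adaptation upper bound, Theorem 1): Y = {1,…,C+1} is
modeled as `Fin (C+1)` with the unknown class C+1 modeled as `Fin.last C`. P assigns
zero mass to the unknown label, π = π_{C+1}^Q < 1, H contains the constant function
x ↦ C+1, and L is nonnegative, bounded, symmetric, and satisfies the triangle
inequality. Then for every h ∈ H:
R_Q(h)/(1−π) ≤ R_P(h) + disc_H(Q_{X|Y≤C}, P_X) + λ + (π/(1−π))·R_{Q,C+1}(h),
where λ = inf_{h'∈H} [ R*_Q(h')/(1−π) + R_P(h') ].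
-/

open MeasureTheory ProbabilityTheory

/-- Risk `R_μ(h) = E_{(x,y)∼μ} L(h(x), y)`. -/
noncomputable def risk {X : Type*} [MeasurableSpace X] {n : ℕ}
    (L : Fin n → Fin n → ℝ) (μ : Measure (X × Fin n)) (h : X → Fin n) : ℝ :=
  ∫ p, L (h p.1) p.2 ∂μ

/-- Partial risk `R_{μ,i}(h) = E_{x ∼ μ(·|y=i)} L(h(x), i)`. -/
noncomputable def partialRisk {X : Type*} [MeasurableSpace X] {n : ℕ}
    (L : Fin n → Fin n → ℝ) (μ : Measure (X × Fin n)) (h : X → Fin n) (i : Fin n) : ℝ :=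
  ∫ p, L (h p.1) i ∂(ProbabilityTheory.cond μ {p | p.2 = i})

/-- Restricted known-class risk `R*_Q(h) = E_{(x,y)∼Q}[L(h(x),y) · 1{y ≤ C}]`. -/
noncomputable def knownRisk {X : Type*} [MeasurableSpace X] {C : ℕ}
    (L : Fin (C + 1) → Fin (C + 1) → ℝ) (Q : Measure (X × Fin (C + 1)))
    (h : X → Fin (C + 1)) : ℝ :=
  ∫ p, Set.indicator {p : X × Fin (C + 1) | p.2 ≠ Fin.last C}
    (fun p => L (h p.1) p.2) p ∂Q

/-- Discrepancy distance
`disc_H(ν, ν') = sup_{h,h'∈H} |E_{x∼ν} L(h(x), h'(x)) − E_{x∼ν'} L(h(x), h'(x))|`. -/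
noncomputable def disc {X : Type*} [MeasurableSpace X] {n : ℕ}
    (L : Fin n → Fin n → ℝ) (H : Set (X → Fin n)) (ν ν' : Measure X) : ℝ :=
  sSup { r | ∃ h ∈ H, ∃ h' ∈ H,
    r = |(∫ x, L (h x) (h' x) ∂ν) - ∫ x, L (h x) (h' x) ∂ν'| }

/-!
Splitting the target risk along the event `y = C+1` gives `R_Q(h) = π R_{Q,C+1}(h) + R*_Q(h)`,
and `R*_Q(h) / (1 - π)` is the risk of `h` under the target conditioned on a known label. It
therefore suffices to prove the closed-set bound
`R_μ(h) ≤ R_P(h) + disc_H(μ_X, P_X) + R_μ(h') + R_P(h')` for any `μ` and `h' ∈ H`: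
the triangle inequality under `μ` bounds `R_μ(h)` by `E_μ L(h, h') + R_μ(h')`, the discrepancy
moves `E L(h, h')` from `μ_X` to `P_X`, and the triangle inequality with symmetry under `P`
bounds `E_P L(h, h')` by `R_P(h) + R_P(h')`. Taking the infimum over `h'` yields `λ`.
-/

theorem setIntegral_eq_measureReal_smul_integral_cond {α E : Type*} [MeasurableSpace α]
    [NormedAddCommGroup E] [NormedSpace ℝ E] (μ : Measure α) [IsFiniteMeasure μ]
    (s : Set α) (f : α → E) :
    ∫ x in s, f x ∂μ = μ.real s • ∫ x, f x ∂μ[|s] := by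
  rw [ProbabilityTheory.cond, integral_smul_measure, smul_smul, ENNReal.toReal_inv,
    ← measureReal_def]
  by_cases hs : μ.real s = 0
  · rw [Measure.restrict_eq_zero.mpr ((measureReal_eq_zero_iff).mp hs)]
    simp
  · rw [mul_inv_cancel₀ hs, one_smul]

section ClosedSet

variable {X : Type*} [MeasurableSpace X] {n : ℕ} {L : Fin n → Fin n → ℝ}

theorem measurableSet_label (i : Fin n) : MeasurableSet {p : X × Fin n | p.2 = i} :=
  measurable_snd (measurableSet_singleton i)

theorem integrable_loss_comp (L : Fin n → Fin n → ℝ) {α : Type*} [MeasurableSpace α]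
    (μ : Measure α) [IsFiniteMeasure μ] {g g' : α → Fin n} (hg : Measurable g)
    (hg' : Measurable g') :
    Integrable (fun a => L (g a) (g' a)) μ :=
  (Integrable.of_finite (f := fun q : Fin n × Fin n => L q.1 q.2)).comp_measurable
    (hg.prodMk hg')

theorem bddAbove_disc_set (H : Set (X → Fin n)) (ν ν' : Measure X) [IsFiniteMeasure ν]
    [IsFiniteMeasure ν'] :
    BddAbove {r | ∃ h ∈ H, ∃ h' ∈ H,
      r = |(∫ x, L (h x) (h' x) ∂ν) - ∫ x, L (h x) (h' x) ∂ν'|} := by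
  obtain ⟨B, hB⟩ := (Set.finite_range fun q : Fin n × Fin n => ‖L q.1 q.2‖).bddAbove
  have hbound : ∀ (μ : Measure X) [IsFiniteMeasure μ] (g g' : X → Fin n),
      ‖∫ x, L (g x) (g' x) ∂μ‖ ≤ B * μ.real Set.univ := fun μ _ g g' =>
    norm_integral_le_of_norm_le_const (ae_of_all _ fun x => hB ⟨(g x, g' x), rfl⟩)
  refine ⟨B * ν.real Set.univ + B * ν'.real Set.univ, ?_⟩
  rintro r ⟨h, -, h', -, rfl⟩
  exact (norm_sub_le _ _).trans (add_le_add (hbound ν h h') (hbound ν' h h'))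

theorem integral_le_integral_add_disc {H : Set (X → Fin n)} {ν ν' : Measure X}
    [IsFiniteMeasure ν] [IsFiniteMeasure ν'] {h h' : X → Fin n} (hh : h ∈ H)
    (hh' : h' ∈ H) :
    ∫ x, L (h x) (h' x) ∂ν ≤ (∫ x, L (h x) (h' x) ∂ν') + disc L H ν ν' := by
  have hle : |(∫ x, L (h x) (h' x) ∂ν) - ∫ x, L (h x) (h' x) ∂ν'| ≤ disc L H ν ν' :=
    le_csSup (bddAbove_disc_set H ν ν') ⟨h, hh, h', hh', rfl⟩
  linarith [le_abs_self ((∫ x, L (h x) (h' x) ∂ν) - ∫ x, L (h x) (h' x) ∂ν')]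

variable (μ : Measure (X × Fin n)) [IsFiniteMeasure μ] {h h' : X → Fin n}

theorem risk_le_integral_add_risk (hL_tri : ∀ a b c, L a c ≤ L a b + L b c)
    (mh : Measurable h) (mh' : Measurable h') :
    risk L μ h ≤ (∫ p, L (h p.1) (h' p.1) ∂μ) + risk L μ h' := by
  have mh₁ : Measurable fun p : X × Fin n => h p.1 := mh.comp measurable_fst
  have mh₁' : Measurable fun p : X × Fin n => h' p.1 := mh'.comp measurable_fst
  rw [risk, risk, ← integral_add (integrable_loss_comp L μ mh₁ mh₁')
    (integrable_loss_comp L μ mh₁' measurable_snd)]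
  exact integral_mono (integrable_loss_comp L μ mh₁ measurable_snd)
    ((integrable_loss_comp L μ mh₁ mh₁').add (integrable_loss_comp L μ mh₁' measurable_snd))
    fun p => hL_tri _ _ _

theorem integral_loss_le_risk_add_risk (hL_symm : ∀ a b, L a b = L b a)
    (hL_tri : ∀ a b c, L a c ≤ L a b + L b c) (mh : Measurable h) (mh' : Measurable h') :
    ∫ p, L (h p.1) (h' p.1) ∂μ ≤ risk L μ h + risk L μ h' := by
  have mh₁ : Measurable fun p : X × Fin n => h p.1 := mh.comp measurable_fst
  have mh₁' : Measurable fun p : X × Fin n => h' p.1 := mh'.comp measurable_fst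
  rw [risk, risk, ← integral_add (integrable_loss_comp L μ mh₁ measurable_snd)
    (integrable_loss_comp L μ mh₁' measurable_snd)]
  exact integral_mono (integrable_loss_comp L μ mh₁ mh₁')
    ((integrable_loss_comp L μ mh₁ measurable_snd).add
      (integrable_loss_comp L μ mh₁' measurable_snd))
    fun p => (hL_tri _ p.2 _).trans_eq (by rw [hL_symm p.2])

theorem risk_le_risk_add_disc_add_risk_add_risk (hL_symm : ∀ a b, L a b = L b a)
    (hL_tri : ∀ a b c, L a c ≤ L a b + L b c) (P : Measure (X × Fin n)) [IsFiniteMeasure P]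
    {H : Set (X → Fin n)} (hh : h ∈ H) (hh' : h' ∈ H) (mh : Measurable h)
    (mh' : Measurable h') :
    risk L μ h ≤
      risk L P h + disc L H (μ.map Prod.fst) (P.map Prod.fst) + (risk L μ h' + risk L P h') := by
  have hmarginal : ∀ (ν : Measure (X × Fin n)) [IsFiniteMeasure ν],
      ∫ x, L (h x) (h' x) ∂(ν.map Prod.fst) = ∫ p, L (h p.1) (h' p.1) ∂ν := fun ν _ =>
    integral_map measurable_fst.aemeasurable (integrable_loss_comp L _ mh mh').aestronglyMeasurable
  have hdisc := integral_le_integral_add_disc (L := L) (ν := μ.map Prod.fst)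
    (ν' := P.map Prod.fst) hh hh'
  rw [hmarginal, hmarginal] at hdisc
  linarith [risk_le_integral_add_risk μ hL_tri mh mh',
    integral_loss_le_risk_add_risk P hL_symm hL_tri mh mh']

theorem risk_le_risk_add_disc_add_sInf (hL_symm : ∀ a b, L a b = L b a)
    (hL_tri : ∀ a b c, L a c ≤ L a b + L b c) (P : Measure (X × Fin n)) [IsFiniteMeasure P]
    {H : Set (X → Fin n)} (hH_meas : ∀ h ∈ H, Measurable h) (hh : h ∈ H) :
    risk L μ h ≤ risk L P h + disc L H (μ.map Prod.fst) (P.map Prod.fst)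
      + sInf {r | ∃ h' ∈ H, r = risk L μ h' + risk L P h'} := by
  have hinf : risk L μ h - risk L P h - disc L H (μ.map Prod.fst) (P.map Prod.fst) ≤
      sInf {r | ∃ h' ∈ H, r = risk L μ h' + risk L P h'} := by
    refine le_csInf ⟨_, h, hh, rfl⟩ ?_
    rintro r ⟨h', hh', rfl⟩
    linarith [risk_le_risk_add_disc_add_risk_add_risk μ hL_symm hL_tri P hh hh'
      (hH_meas h hh) (hH_meas h' hh')]
  linarith

theorem setIntegral_label_eq_measureReal_mul_partialRisk (h : X → Fin n) (i : Fin n) :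
    ∫ p in {p : X × Fin n | p.2 = i}, L (h p.1) p.2 ∂μ =
      μ.real {p | p.2 = i} * partialRisk L μ h i := by
  rw [partialRisk, ← smul_eq_mul, ← setIntegral_eq_measureReal_smul_integral_cond]
  exact setIntegral_congr_fun (measurableSet_label i) fun p (hp : p.2 = i) => by rw [hp]

end ClosedSet

section OpenSet

variable {X : Type*} [MeasurableSpace X] {C : ℕ} {L : Fin (C + 1) → Fin (C + 1) → ℝ}
  (Q : Measure (X × Fin (C + 1))) [IsFiniteMeasure Q]

theorem knownRisk_eq_measureReal_mul_risk_cond (h : X → Fin (C + 1)) :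
    knownRisk L Q h =
      Q.real {p | p.2 ≠ Fin.last C} * risk L Q[|{p | p.2 ≠ Fin.last C}] h := by
  have hmeas : MeasurableSet {p : X × Fin (C + 1) | p.2 ≠ Fin.last C} :=
    (measurableSet_label _).compl
  rw [knownRisk, integral_indicator hmeas, risk, ← smul_eq_mul,
    ← setIntegral_eq_measureReal_smul_integral_cond]

theorem risk_eq_partialRisk_last_add_knownRisk {h : X → Fin (C + 1)} (mh : Measurable h) :
    risk L Q h =
      Q.real {p | p.2 = Fin.last C} * partialRisk L Q h (Fin.last C) + knownRisk L Q h := by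
  have hmeas : MeasurableSet {p : X × Fin (C + 1) | p.2 ≠ Fin.last C} :=
    (measurableSet_label _).compl
  rw [← setIntegral_label_eq_measureReal_mul_partialRisk, knownRisk, integral_indicator hmeas,
    risk]
  exact (integral_add_compl (measurableSet_label _)
    (integrable_loss_comp L Q (mh.comp measurable_fst) measurable_snd)).symm

end OpenSet

theorem open_set_domain_adaptation_upper_bound_general
    {X : Type*} [MeasurableSpace X] (C : ℕ)
    (L : Fin (C + 1) → Fin (C + 1) → ℝ)
    (hL_symm : ∀ a b, L a b = L b a)
    (hL_tri : ∀ a b c, L a c ≤ L a b + L b c)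
    (P Q : Measure (X × Fin (C + 1)))
    [IsProbabilityMeasure P] [IsProbabilityMeasure Q]
    (π : ℝ) (hπ_def : π = (Q {p | p.2 = Fin.last C}).toReal) (hπ : π < 1)
    (H : Set (X → Fin (C + 1))) (hH_meas : ∀ h ∈ H, Measurable h)
    (h : X → Fin (C + 1)) (hh : h ∈ H) :
    risk L Q h / (1 - π) ≤
      risk L P h
      + disc L H
          ((ProbabilityTheory.cond Q {p | p.2 ≠ Fin.last C}).map Prod.fst)
          (P.map Prod.fst)
      + sInf { r | ∃ h' ∈ H, r = knownRisk L Q h' / (1 - π) + risk L P h' }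
      + (π / (1 - π)) * partialRisk L Q h (Fin.last C) := by
  rw [← measureReal_def] at hπ_def
  have hknown_mass : Q.real {p : X × Fin (C + 1) | p.2 ≠ Fin.last C} = 1 - π := by
    rw [hπ_def]
    exact probReal_compl_eq_one_sub (measurableSet_label _)
  have hknown : ∀ g, knownRisk L Q g / (1 - π) = risk L Q[|{p | p.2 ≠ Fin.last C}] g :=
    fun g => by
      rw [knownRisk_eq_measureReal_mul_risk_cond, hknown_mass,
        mul_div_cancel_left₀ _ (sub_ne_zero.mpr hπ.ne')]
  calc risk L Q h / (1 - π)
      = risk L Q[|{p | p.2 ≠ Fin.last C}] h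
          + π / (1 - π) * partialRisk L Q h (Fin.last C) := by
        rw [risk_eq_partialRisk_last_add_knownRisk Q (hH_meas h hh), ← hknown, ← hπ_def]
        ring
    _ ≤ _ := by
        simp only [hknown]
        gcongr
        exact risk_le_risk_add_disc_add_sInf _ hL_symm hL_tri P hH_meas hh

theorem open_set_domain_adaptation_upper_bound
    {X : Type*} [MeasurableSpace X] (C : ℕ) (hC : 1 ≤ C)
    (L : Fin (C + 1) → Fin (C + 1) → ℝ) (M : ℝ)
    (hL_nonneg : ∀ a b, 0 ≤ L a b) (hL_bdd : ∀ a b, L a b ≤ M)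
    (hL_symm : ∀ a b, L a b = L b a)
    (hL_tri : ∀ a b c, L a c ≤ L a b + L b c)
    (P Q : Measure (X × Fin (C + 1)))
    [IsProbabilityMeasure P] [IsProbabilityMeasure Q]
    (hP_unk : P {p | p.2 = Fin.last C} = 0)
    (π : ℝ) (hπ_def : π = (Q {p | p.2 = Fin.last C}).toReal) (hπ : π < 1)
    (H : Set (X → Fin (C + 1))) (hH_meas : ∀ h ∈ H, Measurable h)
    (hH_const : (fun _ : X => Fin.last C) ∈ H)
    (h : X → Fin (C + 1)) (hh : h ∈ H) :
    risk L Q h / (1 - π) ≤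
      risk L P h
      + disc L H
          ((ProbabilityTheory.cond Q {p | p.2 ≠ Fin.last C}).map Prod.fst)
          (P.map Prod.fst)
      + sInf { r | ∃ h' ∈ H, r = knownRisk L Q h' / (1 - π) + risk L P h' }
      + (π / (1 - π)) * partialRisk L Q h (Fin.last C) :=
  open_set_domain_adaptation_upper_bound_general C L hL_symm hL_tri P Q π hπ_def hπ H hH_meas h hh
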